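/- arXiv:1704.03371 — 8 statements merged into one kernel-verified Lean document; each statement's English description precedes it below -/
import Mathlib

section
/- For any matrix A ∈ R^{n×d} and any integer k ≥ 1 with k ≤ rank considerations, the sum over all columns i of the rank-k ridge leverage scores τ_i^k(A) = a_i^T (AA^T + (‖A − A_k‖_F^2 / k) I)^+ a_i is at most 2k. -/
open Matrix

/-- Squared Frobenius norm of a matrix. -/
noncomputable def frobSq {n m : ℕ} (A : Matrix (Fin n) (Fin m) ℝ) : ℝ :=
  ∑ i, ∑ j, (A i j) ^ 2

/-- `P` is the Moore–Penrose pseudoinverse of `M` (the four Penrose conditions). -/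
def IsMoorePenrose {n : ℕ} (M P : Matrix (Fin n) (Fin n) ℝ) : Prop :=
  M * P * M = M ∧ P * M * P = P ∧ (M * P)ᵀ = M * P ∧ (P * M)ᵀ = P * M

/-!
Write `AAᵀ = U diag(μ) Uᵀ` and `λ = ‖A - A_k‖_F²/k`. By uniqueness of the pseudoinverse,
`P = U diag((μ + λ)⁻¹) Uᵀ`, so the sum of the scores is `tr(P AAᵀ) = Σⱼ μⱼ/(μⱼ + λ)`.
Let `Q` be the orthogonal projection onto the column space of `A_k` and `cⱼ = (UᵀQU)ⱼⱼ ∈ [0, 1]`,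
so that `Σⱼ cⱼ = tr Q = rank A_k ≤ k`. Splitting each term with the weights `cⱼ` and `1 - cⱼ`,
the first part is at most `Σⱼ cⱼ ≤ k`; the second is at most `Σⱼ (1 - cⱼ) μⱼ / λ`, and
`Σⱼ (1 - cⱼ) μⱼ = ‖(I - Q)A‖_F² = ‖(I - Q)(A - A_k)‖_F² ≤ ‖A - A_k‖_F² = kλ`.
-/

namespace IsMoorePenrose

variable {n : ℕ} {M P P' U : Matrix (Fin n) (Fin n) ℝ}

theorem unique (hP : IsMoorePenrose M P) (hP' : IsMoorePenrose M P') : P = P' := by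
  obtain ⟨h₁, h₂, h₃, h₄⟩ := hP
  obtain ⟨h₁', h₂', h₃', h₄'⟩ := hP'
  have hleft : P = P * M * P' :=
    calc P = P * (M * P)ᵀ := by rw [h₃, ← Matrix.mul_assoc, h₂]
      _ = P * (M * P' * M * P)ᵀ := by rw [h₁']
      _ = P * ((M * P)ᵀ * (M * P')ᵀ) := by rw [← transpose_mul]; simp only [Matrix.mul_assoc]
      _ = P * M * P' := by rw [h₃, h₃']; simp only [← Matrix.mul_assoc]; rw [h₂]
  have hright : P' = P * M * P' :=
    calc P' = (P' * M)ᵀ * P' := by rw [h₄', h₂']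
      _ = (P' * (M * P * M))ᵀ * P' := by rw [h₁]
      _ = (P * M)ᵀ * (P' * M)ᵀ * P' := by rw [← transpose_mul]; simp only [Matrix.mul_assoc]
      _ = P * M * P' := by rw [h₄, h₄', Matrix.mul_assoc (P * M), h₂']
  exact hleft.trans hright.symm

/-- Thanks to the convention `0⁻¹ = 0`, this needs no hypothesis on the zero pattern of `d`. -/
theorem diagonal (d : Fin n → ℝ) :
    IsMoorePenrose (Matrix.diagonal d) (Matrix.diagonal d⁻¹) := by
  have h : ∀ e : Fin n → ℝ,
      Matrix.diagonal e * Matrix.diagonal e⁻¹ * Matrix.diagonal e = Matrix.diagonal e :=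
    fun e => by simp only [diagonal_mul_diagonal, Pi.inv_apply, mul_inv_mul_cancel]
  refine ⟨h d, by simpa using h d⁻¹, ?_, ?_⟩ <;>
    simp only [diagonal_mul_diagonal, diagonal_transpose]

theorem orthogonal_conjugate (hU : U ∈ orthogonalGroup (Fin n) ℝ) (h : IsMoorePenrose M P) :
    IsMoorePenrose (U * M * Uᵀ) (U * P * Uᵀ) := by
  have hU' : Uᵀ * U = 1 := (mem_orthogonalGroup_iff' _ ℝ).mp hU
  have hmul : ∀ X Y : Matrix (Fin n) (Fin n) ℝ,
      U * X * Uᵀ * (U * Y * Uᵀ) = U * (X * Y) * Uᵀ := by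
    intro X Y; simp only [Matrix.mul_assoc, ← Matrix.mul_assoc Uᵀ U, hU', Matrix.one_mul]
  have htr : ∀ X : Matrix (Fin n) (Fin n) ℝ, (U * X * Uᵀ)ᵀ = U * Xᵀ * Uᵀ := by
    intro X; rw [transpose_mul, transpose_mul, transpose_transpose, Matrix.mul_assoc]
  obtain ⟨h₁, h₂, h₃, h₄⟩ := h
  exact ⟨by rw [hmul, hmul, h₁], by rw [hmul, hmul, h₂], by rw [hmul, htr, h₃],
    by rw [hmul, htr, h₄]⟩

theorem transpose_mul_mul_eq_diagonal_inv (hU : U ∈ orthogonalGroup (Fin n) ℝ) {μ : Fin n → ℝ}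
    {lam : ℝ} (hP : IsMoorePenrose (U * Matrix.diagonal μ * Uᵀ + lam • 1) P) :
    Uᵀ * P * U = Matrix.diagonal fun j => (μ j + lam)⁻¹ := by
  have hUU : U * Uᵀ = 1 := (mem_orthogonalGroup_iff _ ℝ).mp hU
  have hUU' : Uᵀ * U = 1 := (mem_orthogonalGroup_iff' _ ℝ).mp hU
  have hM : U * Matrix.diagonal μ * Uᵀ + lam • 1 =
      U * Matrix.diagonal (fun j => μ j + lam) * Uᵀ :=
    calc U * Matrix.diagonal μ * Uᵀ + lam • 1
        = U * Matrix.diagonal μ * Uᵀ + U * (lam • 1) * Uᵀ := by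
          rw [Matrix.mul_smul, Matrix.mul_one, Matrix.smul_mul, hUU]
      _ = U * Matrix.diagonal (fun j => μ j + lam) * Uᵀ := by
          rw [← Matrix.add_mul, ← Matrix.mul_add, smul_one_eq_diagonal, diagonal_add]
  rw [hP.unique (hM ▸ (IsMoorePenrose.diagonal _).orthogonal_conjugate hU)]
  simp only [← Matrix.mul_assoc, hUU', Matrix.one_mul]
  rw [Matrix.mul_assoc _ Uᵀ U, hUU', Matrix.mul_one]
  rfl

end IsMoorePenrose

section StarProjection

variable {m : Type*} [Fintype m] {Q : Matrix m m ℝ}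

theorem Matrix.isStarProjection_iff_transpose :
    IsStarProjection Q ↔ Q * Q = Q ∧ Qᵀ = Q := by
  rw [isStarProjection_iff, IsIdempotentElem, IsSelfAdjoint, star_eq_conjTranspose,
    conjTranspose_eq_transpose_of_trivial]

theorem IsStarProjection.transpose_eq (hQ : IsStarProjection Q) : Qᵀ = Q :=
  (isStarProjection_iff_transpose.mp hQ).2

theorem IsStarProjection.orthogonal_conjugate [DecidableEq m] {U : Matrix m m ℝ}
    (hQ : IsStarProjection Q) (hU : U ∈ orthogonalGroup m ℝ) : IsStarProjection (Uᵀ * Q * U) := by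
  have hUU : U * Uᵀ = 1 := (mem_orthogonalGroup_iff m ℝ).mp hU
  refine isStarProjection_iff_transpose.mpr ⟨?_, ?_⟩
  · calc Uᵀ * Q * U * (Uᵀ * Q * U) = Uᵀ * (Q * (U * Uᵀ) * Q) * U := by
          simp only [Matrix.mul_assoc]
      _ = Uᵀ * Q * U := by rw [hUU, Matrix.mul_one, hQ.isIdempotentElem.eq, Matrix.mul_assoc]
  · rw [transpose_mul, transpose_mul, transpose_transpose, hQ.transpose_eq, Matrix.mul_assoc]

theorem IsStarProjection.diag_mem_Icc (hQ : IsStarProjection Q) (j : m) :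
    Q j j ∈ Set.Icc 0 1 := by
  have hsq : Q j j = ∑ l, Q j l ^ 2 :=
    calc Q j j = (Q * Qᵀ) j j := by rw [hQ.transpose_eq, hQ.isIdempotentElem.eq]
      _ = ∑ l, Q j l ^ 2 := by simp only [mul_apply, transpose_apply, sq]
  have hle : Q j j ^ 2 ≤ Q j j :=
    hsq ▸ Finset.single_le_sum (fun l _ => sq_nonneg (Q j l)) (Finset.mem_univ j)
  have hnonneg : 0 ≤ Q j j := hsq ▸ Finset.sum_nonneg fun l _ => sq_nonneg (Q j l)
  exact ⟨hnonneg, by nlinarith⟩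

end StarProjection

theorem trace_mul_conj_diagonal {m : Type*} [Fintype m] [DecidableEq m] (X U : Matrix m m ℝ)
    (μ : m → ℝ) : trace (X * (U * diagonal μ * Uᵀ)) = ∑ j, (Uᵀ * X * U) j j * μ j := by
  rw [← Matrix.mul_assoc, trace_mul_comm, ← Matrix.mul_assoc, ← Matrix.mul_assoc]
  simp only [trace, diag_apply, mul_diagonal]

theorem sum_dotProduct_mulVec_eq_trace {m n : Type*} [Fintype m] [Fintype n] (A : Matrix m n ℝ)
    (P : Matrix m m ℝ) : ∑ i, (Aᵀ i) ⬝ᵥ (P *ᵥ (Aᵀ i)) = trace (P * (A * Aᵀ)) := by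
  rw [← Matrix.mul_assoc, trace_mul_comm, trace]
  simp [mul_apply, dotProduct, mulVec, Finset.mul_sum]

theorem exists_mem_orthogonalGroup_mul_transpose_eq {m n : Type*} [Fintype m] [DecidableEq m]
    [Fintype n] (X : Matrix m n ℝ) :
    ∃ U ∈ orthogonalGroup m ℝ, ∃ μ : m → ℝ, (∀ j, 0 ≤ μ j) ∧ X * Xᵀ = U * diagonal μ * Uᵀ := by
  have hX : (X * Xᵀ).PosSemidef := by simpa using posSemidef_self_mul_conjTranspose X
  refine ⟨hX.isHermitian.eigenvectorUnitary, hX.isHermitian.eigenvectorUnitary.prop,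
    hX.isHermitian.eigenvalues, hX.eigenvalues_nonneg, ?_⟩
  conv_lhs => rw [hX.isHermitian.spectral_theorem]
  simp [Unitary.conjStarAlgAut_apply, star_eq_conjTranspose]

theorem Submodule.trace_starProjection {E : Type*} [NormedAddCommGroup E] [InnerProductSpace ℝ E]
    [FiniteDimensional ℝ E] (V : Submodule ℝ E) :
    LinearMap.trace ℝ E V.starProjection = Module.finrank ℝ V :=
  LinearMap.IsProj.trace ⟨V.starProjection_apply_mem, fun _ ↦ V.starProjection_eq_self_iff.mpr⟩

theorem exists_isStarProjection_mul_eq_self_and_trace_eq_rank {m n : Type*} [Fintype m]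
    [DecidableEq m] [Fintype n] [DecidableEq n] (B : Matrix m n ℝ) :
    ∃ Q : Matrix m m ℝ, IsStarProjection Q ∧ Q * B = B ∧ Q.trace = B.rank := by
  set V := LinearMap.range (toEuclideanLin B)
  set e := (toEuclideanCLM (𝕜 := ℝ) (n := m)).symm.toStarAlgHom
  have he : toEuclideanLin (e V.starProjection) = V.starProjection := by
    rw [← coe_toEuclideanCLM_eq_toEuclideanLin]
    exact congrArg _ (toEuclideanCLM.apply_symm_apply _)
  refine ⟨e V.starProjection, isStarProjection_starProjection.map e, ?_, ?_⟩
  · apply toEuclideanLin.injective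
    ext x : 1
    rw [toLpLin_mul_same, LinearMap.comp_apply, he]
    exact Submodule.starProjection_eq_self_iff.mpr (LinearMap.mem_range_self _ x)
  · rw [← LinearMap.toMatrix_toLin (PiLp.basisFun 2 ℝ m) (PiLp.basisFun 2 ℝ m) (e _),
      ← LinearMap.trace_eq_matrix_trace, ← toLpLin_eq_toLin, he, V.trace_starProjection,
      rank_eq_finrank_range_toLin B (PiLp.basisFun 2 ℝ m) (PiLp.basisFun 2 ℝ n)]
    rfl

section Frobenius

variable {n d : ℕ} {Q : Matrix (Fin n) (Fin n) ℝ}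

theorem frobSq_eq_trace (X : Matrix (Fin n) (Fin d) ℝ) : frobSq X = trace (X * Xᵀ) := by
  simp only [frobSq, trace, diag_apply, mul_apply, transpose_apply, sq]

theorem frobSq_nonneg (X : Matrix (Fin n) (Fin d) ℝ) : 0 ≤ frobSq X := by
  unfold frobSq; positivity

theorem IsStarProjection.trace_mul_mul_transpose_eq_frobSq (hQ : IsStarProjection Q)
    (Y : Matrix (Fin n) (Fin d) ℝ) : trace (Q * (Y * Yᵀ)) = frobSq (Q * Y) :=
  calc trace (Q * (Y * Yᵀ)) = trace (Q * Q * (Y * Yᵀ)) := by rw [hQ.isIdempotentElem.eq]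
    _ = trace (Q * Y * (Q * Y)ᵀ) := by
      rw [transpose_mul, hQ.transpose_eq, Matrix.mul_assoc Q Q, trace_mul_comm Q (Q * _)]
      simp only [Matrix.mul_assoc]
    _ = frobSq (Q * Y) := (frobSq_eq_trace _).symm

theorem IsStarProjection.frobSq_mul_le (hQ : IsStarProjection Q)
    (Y : Matrix (Fin n) (Fin d) ℝ) : frobSq (Q * Y) ≤ frobSq Y := by
  have hsplit : frobSq Y = frobSq (Q * Y) + frobSq ((1 - Q) * Y) := by
    rw [← hQ.trace_mul_mul_transpose_eq_frobSq, ← hQ.one_sub.trace_mul_mul_transpose_eq_frobSq,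
      ← trace_add, ← Matrix.add_mul, add_sub_cancel, Matrix.one_mul, frobSq_eq_trace]
  linarith [frobSq_nonneg ((1 - Q) * Y)]

theorem IsStarProjection.trace_one_sub_mul_le_frobSq_sub (hQ : IsStarProjection Q)
    {B : Matrix (Fin n) (Fin d) ℝ} (hQB : Q * B = B) (A : Matrix (Fin n) (Fin d) ℝ) :
    trace ((1 - Q) * (A * Aᵀ)) ≤ frobSq (A - B) := by
  have hres : (1 - Q) * A = (1 - Q) * (A - B) := by
    rw [Matrix.mul_sub (1 - Q) A, Matrix.sub_mul 1 Q B, hQB, Matrix.one_mul, sub_self, sub_zero]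
  rw [hQ.one_sub.trace_mul_mul_transpose_eq_frobSq, hres]
  exact hQ.one_sub.frobSq_mul_le _

end Frobenius

theorem sum_div_add_le_two_mul {ι : Type*} [Fintype ι] {μ c : ι → ℝ} {lam k : ℝ}
    (hμ : ∀ j, 0 ≤ μ j) (hc : ∀ j, c j ∈ Set.Icc 0 1) (hlam : 0 ≤ lam)
    (hck : ∑ j, c j ≤ k) (htail : ∑ j, (1 - c j) * μ j ≤ k * lam) :
    ∑ j, μ j / (μ j + lam) ≤ 2 * k := by
  have hf : ∀ j, μ j / (μ j + lam) ≤ 1 := fun j =>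
    div_le_one_of_le₀ (by linarith [hμ j]) (by linarith [hμ j])
  have hhead : ∑ j, c j * (μ j / (μ j + lam)) ≤ k :=
    (Finset.sum_le_sum fun j _ => mul_le_of_le_one_right (hc j).1 (hf j)).trans hck
  have htail_nonneg : ∀ j, 0 ≤ (1 - c j) * μ j := fun j =>
    mul_nonneg (sub_nonneg.mpr (hc j).2) (hμ j)
  have hrest : ∑ j, (1 - c j) * (μ j / (μ j + lam)) ≤ k := by
    rcases hlam.eq_or_lt with rfl | hlam
    · have hzero : ∀ j, (1 - c j) * μ j = 0 := fun j =>
        (Finset.sum_eq_zero_iff_of_nonneg fun j _ => htail_nonneg j).mp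
          (le_antisymm (by simpa using htail) (Finset.sum_nonneg fun j _ => htail_nonneg j)) j
          (Finset.mem_univ j)
      have hk : 0 ≤ k := (Finset.sum_nonneg fun j _ => (hc j).1).trans hck
      simpa [← mul_div_assoc, hzero] using hk
    · calc ∑ j, (1 - c j) * (μ j / (μ j + lam)) ≤ ∑ j, (1 - c j) * μ j / lam :=
            Finset.sum_le_sum fun j _ => by
              rw [mul_div_assoc]
              exact mul_le_mul_of_nonneg_left
                (div_le_div_of_nonneg_left (hμ j) hlam (by linarith [hμ j]))
                (sub_nonneg.mpr (hc j).2)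
        _ = (∑ j, (1 - c j) * μ j) / lam := (Finset.sum_div _ _ _).symm
        _ ≤ k := (div_le_iff₀ hlam).mpr htail
  calc ∑ j, μ j / (μ j + lam)
      = ∑ j, c j * (μ j / (μ j + lam)) + ∑ j, (1 - c j) * (μ j / (μ j + lam)) := by
        rw [← Finset.sum_add_distrib]; exact Finset.sum_congr rfl fun j _ => by ring
    _ ≤ 2 * k := by linarith

theorem sum_ridge_leverage_scores_le_general {n d k : ℕ} (hk : 1 ≤ k)
    (A Ak : Matrix (Fin n) (Fin d) ℝ)
    (hAkrank : Ak.rank ≤ k)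
    (P : Matrix (Fin n) (Fin n) ℝ)
    (hP : IsMoorePenrose
      (A * Aᵀ + (frobSq (A - Ak) / (k : ℝ)) • (1 : Matrix (Fin n) (Fin n) ℝ)) P) :
    ∑ i : Fin d, (Aᵀ i) ⬝ᵥ (P *ᵥ (Aᵀ i)) ≤ 2 * (k : ℝ) := by
  set lam := frobSq (A - Ak) / k
  obtain ⟨U, hU, μ, hμ, hAA⟩ := exists_mem_orthogonalGroup_mul_transpose_eq A
  obtain ⟨Q, hQ, hQAk, hQtr⟩ := exists_isStarProjection_mul_eq_self_and_trace_eq_rank Ak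
  rw [hAA] at hP
  rw [sum_dotProduct_mulVec_eq_trace, hAA, trace_mul_conj_diagonal,
    hP.transpose_mul_mul_eq_diagonal_inv hU]
  simp only [diagonal_apply_eq, inv_mul_eq_div]
  refine sum_div_add_le_two_mul hμ (hQ.orthogonal_conjugate hU).diag_mem_Icc
    (div_nonneg (frobSq_nonneg _) k.cast_nonneg) ?_ ?_
  · calc ∑ j, (Uᵀ * Q * U) j j = trace (Uᵀ * Q * U) := rfl
      _ = Ak.rank := by
          rw [trace_mul_cycle, (mem_orthogonalGroup_iff _ ℝ).mp hU, Matrix.one_mul, hQtr]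
      _ ≤ k := by exact_mod_cast hAkrank
  · calc ∑ j, (1 - (Uᵀ * Q * U) j j) * μ j = trace ((1 - Q) * (A * Aᵀ)) := by
          rw [hAA, trace_mul_conj_diagonal]
          simp [Matrix.mul_sub, Matrix.sub_mul, (mem_orthogonalGroup_iff' _ ℝ).mp hU]
      _ ≤ frobSq (A - Ak) := hQ.trace_one_sub_mul_le_frobSq_sub hQAk A
      _ = k * lam := (mul_div_cancel₀ _ (Nat.cast_ne_zero.mpr (Nat.one_le_iff_ne_zero.mp hk))).symm

/-- The sum of the rank-`k` ridge leverage scores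
`τ_i^k(A) = aᵢᵀ (AAᵀ + (‖A-A_k‖_F²/k) I)⁺ aᵢ` is at most `2k`. -/
theorem sum_ridge_leverage_scores_le {n d k : ℕ} (hk : 1 ≤ k)
    (A Ak : Matrix (Fin n) (Fin d) ℝ)
    (hAkrank : Ak.rank ≤ k)
    (hAkbest : ∀ B : Matrix (Fin n) (Fin d) ℝ, B.rank ≤ k →
      frobSq (A - Ak) ≤ frobSq (A - B))
    (P : Matrix (Fin n) (Fin n) ℝ)
    (hP : IsMoorePenrose
      (A * Aᵀ + (frobSq (A - Ak) / (k : ℝ)) • (1 : Matrix (Fin n) (Fin n) ℝ)) P) :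
    ∑ i : Fin d, (Aᵀ i) ⬝ᵥ (P *ᵥ (Aᵀ i)) ≤ 2 * (k : ℝ) :=
  sum_ridge_leverage_scores_le_general hk A Ak hAkrank P hP
end

section
/- Let λ_1 ≥ λ_2 ≥ … ≥ λ_n ≥ 0 be nonnegative reals and k ≤ n. Then for every index i: λ_i^2 + (1/k)·λ_i·Σ_{j=k+1}^n λ_j ≤ 2·√(n/k)·(λ_i^2 + (1/k)·Σ_{j=k+1}^n λ_j^2). -/
/-- Key scalar inequality: for nonincreasing nonnegative `λ₁ ≥ … ≥ λₙ ≥ 0` and `1 ≤ k ≤ n`,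
for every `i`:
`λᵢ² + (1/k)·λᵢ·Σ_{j>k} λⱼ ≤ 2√(n/k)·(λᵢ² + (1/k)·Σ_{j>k} λⱼ²)`. -/
theorem ridge_scalar_ineq (n k : ℕ) (hk : 1 ≤ k) (hkn : k ≤ n)
    (l : Fin n → ℝ)
    (hmono : ∀ i j : Fin n, i ≤ j → l j ≤ l i)
    (hnn : ∀ i, 0 ≤ l i) (i : Fin n) :
    l i ^ 2 + (1 / (k : ℝ)) * l i *
        (∑ j ∈ Finset.univ.filter (fun j : Fin n => k ≤ (j : ℕ)), l j)
      ≤ 2 * Real.sqrt ((n : ℝ) / (k : ℝ)) *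
        (l i ^ 2 + (1 / (k : ℝ)) *
          ∑ j ∈ Finset.univ.filter (fun j : Fin n => k ≤ (j : ℕ)), (l j) ^ 2) := by
  set s := Finset.univ.filter (fun j : Fin n => k ≤ (j : ℕ)) with hs
  set S := ∑ j ∈ s, l j with hS
  set Q := ∑ j ∈ s, (l j) ^ 2 with hQ
  have hk0 : (0:ℝ) < k := by exact_mod_cast hk
  have hn0 : (0:ℝ) < n := by exact_mod_cast lt_of_lt_of_le hk hkn
  set r := Real.sqrt ((n : ℝ) / (k : ℝ)) with hr
  have hnk1 : (1:ℝ) ≤ (n:ℝ)/(k:ℝ) := by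
    rw [le_div_iff₀ hk0]; simpa using (by exact_mod_cast hkn : (k:ℝ) ≤ n)
  have hr1 : 1 ≤ r := by
    rw [hr, show (1:ℝ) = Real.sqrt 1 by simp]
    exact Real.sqrt_le_sqrt hnk1
  have hr0 : 0 < r := lt_of_lt_of_le one_pos hr1
  have hr2 : r ^ 2 = (n:ℝ)/(k:ℝ) := Real.sq_sqrt (by positivity)
  have hS0 : 0 ≤ S := Finset.sum_nonneg fun j _ => hnn j
  have hQ0 : 0 ≤ Q := Finset.sum_nonneg fun j _ => sq_nonneg _
  have hCS : S ^ 2 ≤ (n : ℝ) * Q := by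
    have h1 : S ^ 2 ≤ (s.card : ℝ) * Q := by
      exact_mod_cast sq_sum_le_card_mul_sum_sq (s := s) (f := l)
    refine h1.trans (mul_le_mul_of_nonneg_right ?_ hQ0)
    exact_mod_cast (Finset.card_filter_le _ _).trans (by simp)
  rcases le_or_gt ((1/(k:ℝ)) * S) (r * l i) with h | h
  · -- small tail case
    have h2 : (1/(k:ℝ)) * l i * S ≤ r * l i ^ 2 := by
      have := mul_le_mul_of_nonneg_left h (hnn i)
      nlinarith [this]
    have hq0 : 0 ≤ (1/(k:ℝ)) * Q := by positivity
    nlinarith [h2, hr1, sq_nonneg (l i),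
      mul_nonneg (sub_nonneg.2 hr1) (sq_nonneg (l i)),
      mul_nonneg hr0.le hq0]
  · -- large tail case
    have hkS : 0 ≤ (1/(k:ℝ)) * S := by positivity
    have h1 : r * (l i * ((1/(k:ℝ)) * S)) ≤ ((1/(k:ℝ)) * S) ^ 2 := by
      nlinarith [mul_le_mul_of_nonneg_right h.le hkS]
    have h2 : ((1/(k:ℝ)) * S) ^ 2 ≤ r * (r * Q / (k:ℝ)) := by
      have e : r * (r * Q / (k:ℝ)) = (n:ℝ) * Q / (k:ℝ)^2 := by
        rw [show r * (r * Q / (k:ℝ)) = r^2 * Q / (k:ℝ) from by ring, hr2]; ring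
      rw [e, show ((1/(k:ℝ)) * S) ^ 2 = S^2 / (k:ℝ)^2 from by ring]
      gcongr
    have h3 : l i * ((1/(k:ℝ)) * S) ≤ r * Q / (k:ℝ) := by
      have := h1.trans h2
      exact le_of_mul_le_mul_left this hr0
    have hq0 : 0 ≤ (1/(k:ℝ)) * Q := by positivity
    have h4 : r * Q / (k:ℝ) = r * ((1/(k:ℝ)) * Q) := by ring
    rw [h4] at h3
    nlinarith [h3, hr1, sq_nonneg (l i),
      mul_nonneg hr0.le hq0,
      mul_nonneg (by linarith : (0:ℝ) ≤ 2*r - 1) (sq_nonneg (l i))]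
end

section
/- For any matrix A ∈ R^{n×d} with columns a_i, and for any column index i with a_i ≠ 0, the rank-1 matrix a_i a_i^T satisfies (1/ℓ_i)·a_i a_i^T ⪯ AA^T, where ℓ_i = a_i^T (AA^T)^+ a_i is the leverage score of column i. -/
/-!
Write `M = AAᵀ` and `a = aᵢ`. The Penrose condition `MPM = M` makes `MP` the identity on the
column space of `M`, which contains that of `A`; so `y = Pa` solves `My = a` and `ℓ = aᵀy = yᵀMy`.
Cauchy–Schwarz for the semi-inner product `⟪x, y⟫ = xᵀMy` then gives
`(aᵀx)² = (yᵀMx)² ≤ ℓ · xᵀMx` for every `x`, which is `xᵀ(M - ℓ⁻¹aaᵀ)x ≥ 0`.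
-/

open Matrix

namespace Matrix

variable {m n : Type*} [Fintype m] [Fintype n]

theorem mul_eq_self_of_mul_self_mul_conjTranspose {R : Type*} [PartialOrder R] [Ring R]
    [StarRing R] [StarOrderedRing R] [NoZeroDivisors R] [DecidableEq m]
    {Q : Matrix m m R} {A : Matrix m n R} (h : Q * (A * Aᴴ) = A * Aᴴ) : Q * A = A := by
  have h0 : (1 - Q) * (A * Aᴴ) = 0 := by rw [Matrix.sub_mul, h, Matrix.one_mul, sub_self]
  rw [mul_self_mul_conjTranspose_eq_zero, Matrix.sub_mul, Matrix.one_mul, sub_eq_zero] at h0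
  exact h0.symm

theorem PosSemidef.dotProduct_mulVec_sq_le {M : Matrix n n ℝ} (hM : M.PosSemidef) (x y : n → ℝ) :
    (x ⬝ᵥ M *ᵥ y) ^ 2 ≤ (x ⬝ᵥ M *ᵥ x) * (y ⬝ᵥ M *ᵥ y) := by
  let _ := M.toSeminormedAddCommGroup hM
  let _ := M.toInnerProductSpace hM
  have h := real_inner_mul_inner_self_le x y
  change ((M *ᵥ y) ⬝ᵥ x) * ((M *ᵥ y) ⬝ᵥ x) ≤ ((M *ᵥ x) ⬝ᵥ x) * ((M *ᵥ y) ⬝ᵥ y) at h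
  simpa only [dotProduct_comm (M *ᵥ _), sq] using h

theorem PosSemidef.sub_one_div_smul_vecMulVec_of_mulVec_eq {M : Matrix n n ℝ}
    (hM : M.PosSemidef) {a y : n → ℝ} (hy : M *ᵥ y = a) :
    (M - (1 / (a ⬝ᵥ y)) • vecMulVec a a).PosSemidef := by
  have hherm : (M - (1 / (a ⬝ᵥ y)) • vecMulVec a a).IsHermitian :=
    hM.isHermitian.sub ((posSemidef_vecMulVec_self_star a).isHermitian.smul (IsSelfAdjoint.all _))
  refine posSemidef_iff_dotProduct_mulVec.mpr ⟨hherm, fun x => ?_⟩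
  have hcs : (x ⬝ᵥ a) ^ 2 ≤ (x ⬝ᵥ M *ᵥ x) * (a ⬝ᵥ y) := by
    simpa only [hy, dotProduct_comm y a] using hM.dotProduct_mulVec_sq_le x y
  have hxMx : 0 ≤ x ⬝ᵥ M *ᵥ x := by simpa using hM.dotProduct_mulVec_nonneg x
  rw [star_trivial, sub_mulVec, smul_mulVec, vecMulVec_mulVec, dotProduct_sub, dotProduct_smul,
    dotProduct_smul, dotProduct_comm a x, op_smul_eq_mul, smul_eq_mul, ← sq, sub_nonneg, one_div]
  have hℓ : 0 ≤ a ⬝ᵥ y := by simpa [hy, dotProduct_comm] using hM.dotProduct_mulVec_nonneg y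
  -- for `ℓ = 0` the junk value `1 / 0 = 0` leaves just `M`
  rcases hℓ.eq_or_lt with hℓ0 | hℓpos
  · simpa [← hℓ0] using hxMx
  · rwa [inv_mul_le_iff₀ hℓpos, mul_comm]

end Matrix

theorem outer_div_leverage_le_gram_general {n d : ℕ} (A : Matrix (Fin n) (Fin d) ℝ)
    (i : Fin d)
    (P : Matrix (Fin n) (Fin n) ℝ) (hP : IsMoorePenrose (A * Aᵀ) P) :
    (A * Aᵀ - (1 / ((Aᵀ i) ⬝ᵥ (P *ᵥ (Aᵀ i)))) •
        Matrix.vecMulVec (Aᵀ i) (Aᵀ i)).PosSemidef := by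
  have hM : (A * Aᵀ).PosSemidef := by simpa using posSemidef_self_mul_conjTranspose A
  have hMPA : A * Aᵀ * P * A = A :=
    mul_eq_self_of_mul_self_mul_conjTranspose (by simpa using hP.1)
  have hy : (A * Aᵀ) *ᵥ (P *ᵥ Aᵀ i) = Aᵀ i := by
    rw [show Aᵀ i = A *ᵥ Pi.single i 1 from (mulVec_single_one A i).symm, mulVec_mulVec,
      mulVec_mulVec, hMPA]
  exact hM.sub_one_div_smul_vecMulVec_of_mulVec_eq hy

/-- For any `A ∈ ℝ^{n×d}` with a nonzero column `aᵢ`, we have `(1/ℓᵢ)·aᵢaᵢᵀ ⪯ AAᵀ` in the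
Loewner order, where `ℓᵢ = aᵢᵀ(AAᵀ)⁺aᵢ` is the leverage score of column `i`. -/
theorem outer_div_leverage_le_gram {n d : ℕ} (A : Matrix (Fin n) (Fin d) ℝ)
    (i : Fin d) (hne : Aᵀ i ≠ 0)
    (P : Matrix (Fin n) (Fin n) ℝ) (hP : IsMoorePenrose (A * Aᵀ) P) :
    (A * Aᵀ - (1 / ((Aᵀ i) ⬝ᵥ (P *ᵥ (Aᵀ i)))) •
        Matrix.vecMulVec (Aᵀ i) (Aᵀ i)).PosSemidef :=
  outer_div_leverage_le_gram_general A i P hP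
end

section
/- Let A ∈ R^{n×n} be PSD, y ∈ R^n, λ ≥ 0, ε ∈ (0,1/2], and let B ∈ R^{n×n} satisfy ‖A − B‖_2^2 ≤ ε^2 λ. Then for every x ∈ R^n: ‖Bx − y‖_2^2 + λ‖x‖_2^2 ∈ [(1−2ε)(‖Ax−y‖_2^2 + λ‖x‖_2^2), (1+2ε)(‖Ax−y‖_2^2 + λ‖x‖_2^2)]. -/
open Matrix

/-- Spectral (operator) norm of a matrix. -/
noncomputable def spec {n m : ℕ} (A : Matrix (Fin n) (Fin m) ℝ) : ℝ :=
  ‖LinearMap.toContinuousLinearMap (Matrix.toEuclideanLin A)‖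

/-!
Write `Bx - y = (Ax - y) + (B - A)x`. The perturbation has `‖(B - A)x‖² ≤ ε²λ‖x‖²`, so
expanding the square, Cauchy–Schwarz and AM–GM bound the change of the objective by
`ε (‖Ax - y‖² + λ‖x‖²) + ε²λ‖x‖²`, which is at most `2ε` times the objective since `ε ≤ 1`.
-/

theorem norm_toEuclideanLin_le_spec_mul {n m : ℕ} (M : Matrix (Fin n) (Fin m) ℝ)
    (x : EuclideanSpace ℝ (Fin m)) : ‖Matrix.toEuclideanLin M x‖ ≤ spec M * ‖x‖ :=
  (LinearMap.toContinuousLinearMap (Matrix.toEuclideanLin M)).le_opNorm x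

theorem norm_toEuclideanLin_sub_le_spec_mul {n m : ℕ} (A B : Matrix (Fin n) (Fin m) ℝ)
    (x : EuclideanSpace ℝ (Fin m)) :
    ‖Matrix.toEuclideanLin B x - Matrix.toEuclideanLin A x‖ ≤ spec (A - B) * ‖x‖ := by
  rw [← norm_neg, neg_sub, ← LinearMap.sub_apply, ← map_sub]
  exact norm_toEuclideanLin_le_spec_mul (A - B) x

theorem two_mul_le_mul_sq_add_of_sq_le {a b r ε : ℝ} (hr : 0 ≤ r) (hε : 0 ≤ ε)
    (hb : b ^ 2 ≤ ε ^ 2 * r) : 2 * a * b ≤ ε * (a ^ 2 + r) := by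
  -- compare squares: `(2ab)² ≤ 4a²ε²r ≤ ε²(a² + r)²`
  apply abs_le_of_sq_le_sq' _ (by positivity) |>.2
  nlinarith [sq_nonneg (a ^ 2 - r), mul_le_mul_of_nonneg_left hb (sq_nonneg (2 * a))]

theorem abs_norm_add_sq_sub_norm_sq_le {E : Type*} [NormedAddCommGroup E]
    [InnerProductSpace ℝ E] {u v : E} {r ε : ℝ} (hr : 0 ≤ r) (hε0 : 0 ≤ ε) (hε1 : ε ≤ 1)
    (hv : ‖v‖ ^ 2 ≤ ε ^ 2 * r) : |‖u + v‖ ^ 2 - ‖u‖ ^ 2| ≤ 2 * ε * (‖u‖ ^ 2 + r) := by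
  have hcross : 2 * ‖u‖ * ‖v‖ ≤ ε * (‖u‖ ^ 2 + r) :=
    two_mul_le_mul_sq_add_of_sq_le hr hε0 hv
  have hεr : ε ^ 2 * r ≤ ε * r := by nlinarith [mul_le_mul_of_nonneg_left hε1 hε0]
  rw [norm_add_sq_real, abs_le]
  have hinner := abs_le.mp (abs_real_inner_le_norm u v)
  constructor <;> nlinarith [hinner.1, hinner.2, sq_nonneg ‖v‖]

theorem ridge_objective_comparison_general {n : ℕ}
    (A B : Matrix (Fin n) (Fin n) ℝ)
    (y : EuclideanSpace ℝ (Fin n)) (lam ε : ℝ) (hlam : 0 ≤ lam)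
    (hε : ε ∈ Set.Ioc (0 : ℝ) (1 / 2))
    (hAB : spec (A - B) ^ 2 ≤ ε ^ 2 * lam)
    (x : EuclideanSpace ℝ (Fin n)) :
    (1 - 2 * ε) * (‖Matrix.toEuclideanLin A x - y‖ ^ 2 + lam * ‖x‖ ^ 2)
        ≤ ‖Matrix.toEuclideanLin B x - y‖ ^ 2 + lam * ‖x‖ ^ 2 ∧
      ‖Matrix.toEuclideanLin B x - y‖ ^ 2 + lam * ‖x‖ ^ 2
        ≤ (1 + 2 * ε) * (‖Matrix.toEuclideanLin A x - y‖ ^ 2 + lam * ‖x‖ ^ 2) := by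
  obtain ⟨hε0, hε2⟩ := hε
  set Ax := Matrix.toEuclideanLin A x
  set Bx := Matrix.toEuclideanLin B x
  have hperturb : ‖Bx - Ax‖ ^ 2 ≤ ε ^ 2 * (lam * ‖x‖ ^ 2) :=
    calc ‖Bx - Ax‖ ^ 2 ≤ (spec (A - B) * ‖x‖) ^ 2 := by
          gcongr; exact norm_toEuclideanLin_sub_le_spec_mul A B x
      _ = spec (A - B) ^ 2 * ‖x‖ ^ 2 := by ring
      _ ≤ ε ^ 2 * (lam * ‖x‖ ^ 2) := by rw [← mul_assoc]; gcongr
  have hcompare := abs_le.mp <| abs_norm_add_sq_sub_norm_sq_le (u := Ax - y)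
    (by positivity) hε0.le (by linarith) hperturb
  rw [show Bx - y = (Ax - y) + (Bx - Ax) by abel]
  constructor <;> linarith [hcompare.1, hcompare.2]

/-- If `‖A - B‖₂² ≤ ε²λ`, then for every `x` the ridge regression objective of `B` is within a
`(1 ± 2ε)` multiplicative factor of that of `A`. -/
theorem ridge_objective_comparison {n : ℕ}
    (A B : Matrix (Fin n) (Fin n) ℝ) (hA : A.PosSemidef)
    (y : EuclideanSpace ℝ (Fin n)) (lam ε : ℝ) (hlam : 0 ≤ lam)
    (hε : ε ∈ Set.Ioc (0 : ℝ) (1 / 2))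
    (hAB : spec (A - B) ^ 2 ≤ ε ^ 2 * lam)
    (x : EuclideanSpace ℝ (Fin n)) :
    (1 - 2 * ε) * (‖Matrix.toEuclideanLin A x - y‖ ^ 2 + lam * ‖x‖ ^ 2)
        ≤ ‖Matrix.toEuclideanLin B x - y‖ ^ 2 + lam * ‖x‖ ^ 2 ∧
      ‖Matrix.toEuclideanLin B x - y‖ ^ 2 + lam * ‖x‖ ^ 2
        ≤ (1 + 2 * ε) * (‖Matrix.toEuclideanLin A x - y‖ ^ 2 + lam * ‖x‖ ^ 2) :=
  ridge_objective_comparison_general A B y lam ε hlam hε hAB x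
end

section
/- Let A ∈ R^{n×n} be PSD, y ∈ R^n, λ ≥ 0, ε ∈ (0,1/2], α ≥ 0, and B with ‖A − B‖_2^2 ≤ ε^2 λ. If x̃ satisfies ‖Bx̃ − y‖_2^2 + λ‖x̃‖_2^2 ≤ (1+α)·min_x (‖Bx − y‖_2^2 + λ‖x‖_2^2), then ‖Ax̃ − y‖_2^2 + λ‖x̃‖_2^2 ≤ (1+α)(1+5ε)·min_x (‖Ax − y‖_2^2 + λ‖x‖_2^2). -/
open Matrix

lemma spec_apply_le {n m : ℕ} (A : Matrix (Fin n) (Fin m) ℝ) (x : EuclideanSpace ℝ (Fin m)) :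
    ‖Matrix.toEuclideanLin A x‖ ≤ spec A * ‖x‖ := by
  have := (LinearMap.toContinuousLinearMap (Matrix.toEuclideanLin A)).le_opNorm x
  simpa [spec] using this

lemma spec_neg_sub {n : ℕ} (A B : Matrix (Fin n) (Fin n) ℝ) : spec (B - A) = spec (A - B) := by
  rw [← neg_sub A B]
  simp only [spec, map_neg, norm_neg]

lemma key_alg (a t s lam ε : ℝ) (ha : 0 ≤ a) (ht : 0 ≤ t) (hs : 0 ≤ s) (hlam : 0 ≤ lam)
    (hε : 0 < ε) (hsl : s ^ 2 ≤ ε ^ 2 * lam) :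
    (a + s * t) ^ 2 + lam * t ^ 2 ≤ (1 + ε + ε ^ 2) * (a ^ 2 + lam * t ^ 2) := by
  have h2 : 0 ≤ t ^ 2 * (ε ^ 2 * lam - s ^ 2) := mul_nonneg (sq_nonneg t) (sub_nonneg.2 hsl)
  have key : ε * ((a + s * t) ^ 2 + lam * t ^ 2)
      ≤ ε * ((1 + ε + ε ^ 2) * (a ^ 2 + lam * t ^ 2)) := by
    nlinarith [sq_nonneg (ε * a - s * t), h2, mul_nonneg hε.le h2,
      mul_nonneg (mul_nonneg (mul_nonneg hε.le hε.le) hε.le) (sq_nonneg a)]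
  exact le_of_mul_le_mul_left key hε

lemma pointwise_compare {n : ℕ} (M N : Matrix (Fin n) (Fin n) ℝ)
    (y : EuclideanSpace ℝ (Fin n)) (lam ε : ℝ) (hlam : 0 ≤ lam) (hε : 0 < ε)
    (hMN : spec (M - N) ^ 2 ≤ ε ^ 2 * lam) (x : EuclideanSpace ℝ (Fin n)) :
    ‖Matrix.toEuclideanLin M x - y‖ ^ 2 + lam * ‖x‖ ^ 2
      ≤ (1 + ε + ε ^ 2) * (‖Matrix.toEuclideanLin N x - y‖ ^ 2 + lam * ‖x‖ ^ 2) := by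
  have h1 : ‖Matrix.toEuclideanLin M x - y‖
      ≤ ‖Matrix.toEuclideanLin N x - y‖ + spec (M - N) * ‖x‖ := by
    have heq : Matrix.toEuclideanLin M x - y
        = (Matrix.toEuclideanLin N x - y) + Matrix.toEuclideanLin (M - N) x := by
      simp only [map_sub, LinearMap.sub_apply]
      abel
    rw [heq]
    exact le_trans (norm_add_le _ _) (by gcongr; exact spec_apply_le _ _)
  have h2 : ‖Matrix.toEuclideanLin M x - y‖ ^ 2
      ≤ (‖Matrix.toEuclideanLin N x - y‖ + spec (M - N) * ‖x‖) ^ 2 := by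
    apply sq_le_sq' _ h1
    have : 0 ≤ ‖Matrix.toEuclideanLin M x - y‖ := norm_nonneg _
    nlinarith [norm_nonneg (Matrix.toEuclideanLin N x - y),
      mul_nonneg (norm_nonneg ((M - N).toEuclideanLin x)) (norm_nonneg x)]
  calc ‖Matrix.toEuclideanLin M x - y‖ ^ 2 + lam * ‖x‖ ^ 2
      ≤ (‖Matrix.toEuclideanLin N x - y‖ + spec (M - N) * ‖x‖) ^ 2 + lam * ‖x‖ ^ 2 := by
        linarith
    _ ≤ (1 + ε + ε ^ 2) * (‖Matrix.toEuclideanLin N x - y‖ ^ 2 + lam * ‖x‖ ^ 2) :=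
        key_alg _ _ _ _ _ (norm_nonneg _) (norm_nonneg _) (norm_nonneg _) hlam hε hMN

/-- Ridge regression via spectral norm low-rank approximation: if `‖A - B‖₂² ≤ ε²λ` and `x̃` is a
`(1+α)`-approximate minimizer of the ridge objective for `B`, then `x̃` is a
`(1+α)(1+5ε)`-approximate minimizer of the ridge objective for `A`. -/
theorem ridge_regression_via_spectral_approx {n : ℕ}
    (A B : Matrix (Fin n) (Fin n) ℝ) (hA : A.PosSemidef)
    (y : EuclideanSpace ℝ (Fin n)) (lam ε α : ℝ) (hlam : 0 ≤ lam) (hα : 0 ≤ α)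
    (hε : ε ∈ Set.Ioc (0 : ℝ) (1 / 2))
    (hAB : spec (A - B) ^ 2 ≤ ε ^ 2 * lam)
    (xt : EuclideanSpace ℝ (Fin n))
    (hxt : ‖Matrix.toEuclideanLin B xt - y‖ ^ 2 + lam * ‖xt‖ ^ 2
      ≤ (1 + α) * ⨅ x : EuclideanSpace ℝ (Fin n),
          (‖Matrix.toEuclideanLin B x - y‖ ^ 2 + lam * ‖x‖ ^ 2)) :
    ‖Matrix.toEuclideanLin A xt - y‖ ^ 2 + lam * ‖xt‖ ^ 2
      ≤ (1 + α) * (1 + 5 * ε) * ⨅ x : EuclideanSpace ℝ (Fin n),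
          (‖Matrix.toEuclideanLin A x - y‖ ^ 2 + lam * ‖x‖ ^ 2) := by
  obtain ⟨hε0, hε2⟩ := hε
  set c : ℝ := 1 + ε + ε ^ 2 with hc
  have hc0 : 0 ≤ c := by positivity
  set fA : EuclideanSpace ℝ (Fin n) → ℝ :=
    fun x => ‖Matrix.toEuclideanLin A x - y‖ ^ 2 + lam * ‖x‖ ^ 2 with hfA
  set fB : EuclideanSpace ℝ (Fin n) → ℝ :=
    fun x => ‖Matrix.toEuclideanLin B x - y‖ ^ 2 + lam * ‖x‖ ^ 2 with hfB
  have hfA0 : ∀ x, 0 ≤ fA x := fun x => by positivity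
  have hfB0 : ∀ x, 0 ≤ fB x := fun x => by positivity
  have hBA : spec (B - A) ^ 2 ≤ ε ^ 2 * lam := by rw [spec_neg_sub]; exact hAB
  have hAleB : ∀ x, fA x ≤ c * fB x := fun x =>
    pointwise_compare A B y lam ε hlam hε0 hAB x
  have hBleA : ∀ x, fB x ≤ c * fA x := fun x =>
    pointwise_compare B A y lam ε hlam hε0 hBA x
  have hbddA : BddBelow (Set.range fA) := ⟨0, fun v ⟨x, hx⟩ => hx ▸ hfA0 x⟩
  have hbddB : BddBelow (Set.range fB) := ⟨0, fun v ⟨x, hx⟩ => hx ▸ hfB0 x⟩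
  have hinfA0 : 0 ≤ ⨅ x, fA x := le_ciInf hfA0
  -- inf fB ≤ c * inf fA
  have hinf : (⨅ x, fB x) ≤ c * ⨅ x, fA x := by
    rw [Real.mul_iInf_of_nonneg hc0]
    exact ciInf_mono hbddB hBleA
  have step1 : fA xt ≤ c * fB xt := hAleB xt
  have step2 : c * fB xt ≤ c * ((1 + α) * ⨅ x, fB x) := by
    apply mul_le_mul_of_nonneg_left hxt hc0
  have step3 : c * ((1 + α) * ⨅ x, fB x) ≤ c * ((1 + α) * (c * ⨅ x, fA x)) := by
    apply mul_le_mul_of_nonneg_left _ hc0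
    apply mul_le_mul_of_nonneg_left hinf (by linarith)
  have he2 : ε ^ 2 ≤ ε / 2 := by nlinarith
  have he3 : ε ^ 3 ≤ ε / 4 := by nlinarith
  have he4 : ε ^ 4 ≤ ε / 8 := by nlinarith [sq_nonneg ε, pow_le_pow_left₀ hε0.le hε2 4]
  have hcsq : c * c ≤ 1 + 5 * ε := by
    have : c * c = 1 + 2 * ε + 3 * ε ^ 2 + 2 * ε ^ 3 + ε ^ 4 := by rw [hc]; ring
    rw [this]; linarith
  have step4 : c * ((1 + α) * (c * ⨅ x, fA x)) ≤ (1 + α) * (1 + 5 * ε) * ⨅ x, fA x := by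
    calc c * ((1 + α) * (c * ⨅ x, fA x)) = (1 + α) * ((c * c) * ⨅ x, fA x) := by ring
      _ ≤ (1 + α) * ((1 + 5 * ε) * ⨅ x, fA x) :=
          mul_le_mul_of_nonneg_left (mul_le_mul_of_nonneg_right hcsq hinfA0) (by linarith)
      _ = (1 + α) * (1 + 5 * ε) * ⨅ x, fA x := by ring
  show fA xt ≤ (1 + α) * (1 + 5 * ε) * ⨅ x, fA x
  linarith [step1, step2, step3, step4]
end

section
/- Let A ∈ R^{n×n} be symmetric with statistical dimension s_λ = tr((A^2+λI)^{-1}A^2) for some λ > 0, and let ε ∈ (0,1]. If k ≥ 2 s_λ/ε^2 then ‖A − A_k‖_2^2 ≤ ε^2 λ, i.e., the (k+1)-st largest eigenvalue in magnitude of A has square at most ε^2 λ. -/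
open Matrix

/-- For a symmetric matrix `A = U (diag l) Uᵀ` with eigenvalues `l` ordered so that their
squares are nonincreasing, if `k ≥ 2 s_λ/ε²` where `s_λ = Σᵢ λᵢ²/(λᵢ² + λ)` is the statistical
dimension, then `‖A - A_k‖₂² ≤ ε² λ`: every eigenvalue beyond the top `k` (in magnitude)
has square at most `ε² λ`. -/
theorem tail_eigenvalue_sq_le_of_statdim {n k : ℕ}
    (A U : Matrix (Fin n) (Fin n) ℝ) (l : Fin n → ℝ)
    (hU : Uᵀ * U = 1) (hdecomp : A = U * Matrix.diagonal l * Uᵀ)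
    (hsort : ∀ i j : Fin n, i ≤ j → (l j) ^ 2 ≤ (l i) ^ 2)
    (lam ε : ℝ) (hlam : 0 < lam) (hε : ε ∈ Set.Ioc (0 : ℝ) 1)
    (hk : 2 * (∑ i : Fin n, (l i) ^ 2 / ((l i) ^ 2 + lam)) / ε ^ 2 ≤ (k : ℝ)) :
    ∀ i : Fin n, k ≤ (i : ℕ) → (l i) ^ 2 ≤ ε ^ 2 * lam := by
  intro i hi
  by_contra hcon
  push_neg at hcon
  have hε0 : 0 < ε := hε.1
  have hε2 : (0:ℝ) < ε ^ 2 := by positivity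
  have hε1 : ε ≤ 1 := hε.2
  -- each term with j ≤ i is at least ε²/2
  have hterm : ∀ j ∈ Finset.Iic i, ε ^ 2 / 2 ≤ (l j) ^ 2 / ((l j) ^ 2 + lam) := by
    intro j hj
    have hji : j ≤ i := Finset.mem_Iic.mp hj
    have h1 : ε ^ 2 * lam ≤ (l j) ^ 2 := le_trans hcon.le (hsort j i hji)
    have hpos : 0 < (l j) ^ 2 + lam := by positivity
    rw [div_le_div_iff₀ (by norm_num) hpos]
    nlinarith [sq_nonneg (l j), mul_nonneg (by nlinarith : (0:ℝ) ≤ 1 - ε ^ 2) (sq_nonneg (l j))]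
  have hcard : (Finset.Iic i).card = (i : ℕ) + 1 := by
    exact Fin.card_Iic i
  have hsum1 : ((i : ℕ) + 1 : ℝ) * (ε ^ 2 / 2) ≤ ∑ j ∈ Finset.Iic i, (l j) ^ 2 / ((l j) ^ 2 + lam) := by
    calc ((i : ℕ) + 1 : ℝ) * (ε ^ 2 / 2)
        = (Finset.Iic i).card • (ε ^ 2 / 2) := by
          rw [hcard]; push_cast; ring
      _ ≤ _ := Finset.card_nsmul_le_sum _ _ _ hterm
  have hsum2 : ∑ j ∈ Finset.Iic i, (l j) ^ 2 / ((l j) ^ 2 + lam)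
      ≤ ∑ j : Fin n, (l j) ^ 2 / ((l j) ^ 2 + lam) := by
    apply Finset.sum_le_sum_of_subset_of_nonneg (Finset.subset_univ _)
    intro j _ _
    have : 0 < (l j) ^ 2 + lam := by positivity
    positivity
  have hki : (k : ℝ) ≤ (i : ℕ) := by exact_mod_cast hi
  have hS : 2 * (∑ j : Fin n, (l j) ^ 2 / ((l j) ^ 2 + lam)) ≤ (k : ℝ) * ε ^ 2 := by
    rw [div_le_iff₀ hε2] at hk
    linarith
  nlinarith [hsum1, hsum2, hS, hki, hε2]
end

section
/- If A' ∈ R^{m×m} is ε-primitive for a matrix A drawn from the random block distribution μ(m,ε) with block S of size |S| = √(16εm) ≥ 4, then A' is not ε-primitive for the m×m identity matrix I. Here ε-primitive for M means Σ_{i≠j}(M_{i,j} − A'_{i,j})^2 ≤ εm. -/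
open Matrix

/-- Squared Frobenius norm of the off-diagonal part of a matrix. -/
noncomputable def offDiagSq {m : ℕ} (M : Matrix (Fin m) (Fin m) ℝ) : ℝ :=
  ∑ i, ∑ j ∈ Finset.univ.filter (fun j : Fin m => j ≠ i), (M i j) ^ 2

/-- `A'` is `ε`-primitive for `M`: the squared Frobenius norm of `M - A'` restricted to
off-diagonal entries is at most `ε m`. -/
noncomputable def IsPrimitive {m : ℕ} (ε : ℝ) (M A' : Matrix (Fin m) (Fin m) ℝ) : Prop :=
  offDiagSq (M - A') ≤ ε * m

lemma offDiagSq_repr {m : ℕ} (M : Matrix (Fin m) (Fin m) ℝ) :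
    offDiagSq M = ∑ p ∈ Finset.univ.filter (fun p : Fin m × Fin m => p.2 ≠ p.1),
      (M p.1 p.2) ^ 2 := by
  rw [offDiagSq, Finset.sum_filter, Fintype.sum_prod_type]
  simp [Finset.sum_filter]

lemma offDiagSq_ge {m : ℕ} (M : Matrix (Fin m) (Fin m) ℝ) (S : Finset (Fin m)) :
    ∑ p ∈ (S ×ˢ S).filter (fun p : Fin m × Fin m => p.2 ≠ p.1), (M p.1 p.2) ^ 2
      ≤ offDiagSq M := by
  rw [offDiagSq_repr]
  apply Finset.sum_le_sum_of_subset_of_nonneg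
  · intro p hp
    simp only [Finset.mem_filter] at hp ⊢
    exact ⟨Finset.mem_univ _, hp.2⟩
  · intro p _ _
    positivity

/-- If `A'` is `ε`-primitive for a random block matrix `A` (all ones on the diagonal and on the
off-diagonal entries of a block `S` with `|S| = √(16 ε m) ≥ 4`), then `A'` is not `ε`-primitive
for the identity. -/
theorem primitive_block_not_primitive_id {m : ℕ} (ε : ℝ) (S : Finset (Fin m))
    (hcard : (S.card : ℝ) = Real.sqrt (16 * ε * m)) (h4 : 4 ≤ S.card)
    (A A' : Matrix (Fin m) (Fin m) ℝ)
    (hA : ∀ i j, A i j = if i = j then 1 else if i ∈ S ∧ j ∈ S then 1 else 0)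
    (hprim : IsPrimitive ε A A') :
    ¬ IsPrimitive ε (1 : Matrix (Fin m) (Fin m) ℝ) A' := by
  intro hprim'
  have hεm : (0:ℝ) ≤ 16 * ε * m := by
    by_contra h
    have h0 : Real.sqrt (16 * ε * m) = 0 := Real.sqrt_eq_zero'.mpr (le_of_not_ge h)
    rw [h0] at hcard
    have : S.card = 0 := Nat.cast_eq_zero.mp hcard
    omega
  have hs2 : (S.card : ℝ) ^ 2 = 16 * ε * m := by
    rw [hcard]; exact Real.sq_sqrt hεm
  set T : Finset (Fin m × Fin m) := (S ×ˢ S).filter (fun p : Fin m × Fin m => p.2 ≠ p.1)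
    with hT
  -- cardinality of T
  have hD : (S ×ˢ S).filter (fun p : Fin m × Fin m => p.2 = p.1)
      = S.image (fun x => (x, x)) := by
    ext p
    simp only [Finset.mem_filter, Finset.mem_product, Finset.mem_image]
    constructor
    · rintro ⟨⟨h1, h2⟩, h3⟩
      exact ⟨p.2, h2, by rw [show (p.2, p.2) = (p.1, p.2) from by rw [h3]]⟩
    · rintro ⟨x, hx, rfl⟩
      exact ⟨⟨hx, hx⟩, rfl⟩
  have hDcard : ((S ×ˢ S).filter (fun p : Fin m × Fin m => p.2 = p.1)).card = S.card := by
    rw [hD]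
    exact Finset.card_image_of_injective _ (fun a b h => (Prod.mk.injEq _ _ _ _ ▸ h).1)
  have hsplit := Finset.card_filter_add_card_filter_not
    (s := S ×ˢ S) (p := fun p : Fin m × Fin m => p.2 = p.1)
  rw [hDcard, Finset.card_product] at hsplit
  have hTcard : T.card + S.card = S.card * S.card := by
    have hTT : T = (S ×ˢ S).filter (fun p : Fin m × Fin m => ¬ p.2 = p.1) := rfl
    rw [hTT]
    omega
  -- each term in T contributes at least 1/2 to the two sums
  have hterm : ∀ p ∈ T, (1:ℝ)/2 ≤ ((A - A') p.1 p.2) ^ 2 + (((1 : Matrix (Fin m) (Fin m) ℝ) - A') p.1 p.2) ^ 2 := by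
    intro p hp
    rw [hT, Finset.mem_filter, Finset.mem_product] at hp
    obtain ⟨⟨h1, h2⟩, hne⟩ := hp
    have hne' : p.1 ≠ p.2 := fun h => hne h.symm
    have hA1 : A p.1 p.2 = 1 := by rw [hA]; simp [hne', h1, h2]
    have hI : (1 : Matrix (Fin m) (Fin m) ℝ) p.1 p.2 = 0 := Matrix.one_apply_ne hne'
    simp only [Matrix.sub_apply, hA1, hI, zero_sub]
    nlinarith [sq_nonneg (1 - 2 * A' p.1 p.2)]
  have hsum : (T.card : ℝ) * (1/2) ≤ offDiagSq (A - A') + offDiagSq ((1 : Matrix (Fin m) (Fin m) ℝ) - A') := by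
    calc (T.card : ℝ) * (1/2) = ∑ _p ∈ T, (1:ℝ)/2 := by
          rw [Finset.sum_const, nsmul_eq_mul]
      _ ≤ ∑ p ∈ T, (((A - A') p.1 p.2) ^ 2 + (((1 : Matrix (Fin m) (Fin m) ℝ) - A') p.1 p.2) ^ 2) :=
          Finset.sum_le_sum hterm
      _ = (∑ p ∈ T, ((A - A') p.1 p.2) ^ 2)
            + ∑ p ∈ T, (((1 : Matrix (Fin m) (Fin m) ℝ) - A') p.1 p.2) ^ 2 :=
          Finset.sum_add_distrib
      _ ≤ _ := add_le_add (offDiagSq_ge _ S) (offDiagSq_ge _ S)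
  have hbound : (T.card : ℝ) * (1/2) ≤ 2 * (ε * m) :=
    hsum.trans (by rw [two_mul]; exact add_le_add hprim hprim')
  have hTreal : (T.card : ℝ) = (S.card : ℝ) * S.card - S.card := by
    have h := hTcard
    have : (T.card : ℝ) + S.card = (S.card : ℝ) * S.card := by exact_mod_cast h
    linarith
  have hs4 : (4:ℝ) ≤ (S.card : ℝ) := by exact_mod_cast h4
  rw [hTreal] at hbound
  nlinarith [hs2, hbound, hs4]
end

section
/- Let A, B ∈ R^{n×n} with ‖A − B‖_F^2 ≤ (1+ε)‖A − A_k‖_F^2 where B has rank at most k. Then ‖A − B‖_2^2 ≤ ‖A − A_k‖_2^2 + ε‖A − A_k‖_F^2. -/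
/-
Let `μ₀ ≥ μ₁ ≥ ⋯` be the eigenvalues of `AᵀA` (the squared singular values of `A`), with
orthonormal eigenvectors `vᵢ`, and let `M` have rank at most `k < n`.
* Truncating `A` to `v₀, …, v_{k-1}` gives a rank-`k` matrix at squared Frobenius distance
  `∑_{i ≥ k} μᵢ` from `A`; hence `‖A - A_k‖_F² ≤ μ_k + ∑_{i > k} μᵢ`.
* `ker M` meets `span (v₀, …, v_k)` in a unit vector `x`, and `‖(A - M) x‖² = ‖A x‖² ≥ μ_k`, so
  `μ_k ≤ ‖A - M‖₂²` (Weyl).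
* For a unit vector `u`, an orthonormal basis `w` of `ker M ∩ u^⊥` has at least `n - k - 1`
  vectors. Bessel's inequality for the family `u, w` gives
  `‖(A - M) u‖² + ∑ⱼ ‖A wⱼ‖² ≤ ‖A - M‖_F²`, and since the weights `∑ⱼ ⟪vᵢ, wⱼ⟫²` lie in `[0, 1]`
  and add up to at least `n - k - 1`, `∑ⱼ ‖A wⱼ‖² = ∑ᵢ μᵢ ∑ⱼ ⟪vᵢ, wⱼ⟫² ≥ ∑_{i > k} μᵢ`.
With `M = A_k` in the second fact and `M = B` in the third,
`‖A - B‖₂² ≤ (1 + ε) ‖A - A_k‖_F² - ∑_{i > k} μᵢ ≤ μ_k + ε ‖A - A_k‖_F²`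
`≤ ‖A - A_k‖₂² + ε ‖A - A_k‖_F²`.
If `k ≥ n`, then `A` itself competes with `A_k`, so `‖A - A_k‖_F = 0` and `‖·‖₂ ≤ ‖·‖_F` suffices.
-/

open Matrix

open Finset Module
open scoped RealInnerProductSpace

theorem Finset.sum_le_sum_mul_of_card_le {ι : Type*} [Fintype ι] (s : Finset ι) {f t : ι → ℝ}
    {c : ℝ} (hc : 0 ≤ c) (hs : ∀ i ∈ s, f i ≤ c) (hsc : ∀ i ∉ s, c ≤ f i)
    (ht₀ : ∀ i, 0 ≤ t i) (ht₁ : ∀ i, t i ≤ 1) (hcard : (#s : ℝ) ≤ ∑ i, t i) :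
    ∑ i ∈ s, f i ≤ ∑ i, f i * t i := by
  classical
  have hin : ∑ i ∈ s, f i * (1 - t i) ≤ ∑ i ∈ s, c * (1 - t i) :=
    sum_le_sum fun i hi => mul_le_mul_of_nonneg_right (hs i hi) (sub_nonneg.2 (ht₁ i))
  have hout : ∑ i ∈ sᶜ, c * t i ≤ ∑ i ∈ sᶜ, f i * t i :=
    sum_le_sum fun i hi => mul_le_mul_of_nonneg_right (hsc i (mem_compl.1 hi)) (ht₀ i)
  rw [← sum_add_sum_compl s] at hcard ⊢
  simp only [mul_sub, mul_one, sum_sub_distrib, ← mul_sum, sum_const, nsmul_eq_mul] at hin hout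
  nlinarith [mul_nonneg hc (sub_nonneg.2 hcard)]

theorem Submodule.finrank_add_finrank_le_finrank_inf_add {K V : Type*} [DivisionRing K]
    [AddCommGroup V] [Module K V] [FiniteDimensional K V] (s t : Submodule K V) :
    finrank K s + finrank K t ≤ finrank K ↥(s ⊓ t) + finrank K V := by
  rw [← Submodule.finrank_sup_add_finrank_inf_eq]
  linarith [Submodule.finrank_le (s ⊔ t)]

section InnerProductSpace

variable {E F : Type*} [NormedAddCommGroup E] [InnerProductSpace ℝ E]
  [NormedAddCommGroup F] [InnerProductSpace ℝ F]

theorem Orthonormal.sum_sq_inner_le {ι : Type*} [Fintype ι] {w : ι → E} (hw : Orthonormal ℝ w)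
    (x : E) : ∑ j, ⟪x, w j⟫ ^ 2 ≤ ‖x‖ ^ 2 := by
  simpa [real_inner_comm] using hw.sum_inner_products_le x (s := univ)

theorem Orthonormal.mem_orthogonal_span_image {ι : Type*} [DecidableEq E] {w : ι → E}
    (hw : Orthonormal ℝ w) {s : Finset ι} {i : ι} (hi : i ∉ s) :
    w i ∈ (Submodule.span ℝ (s.image w : Set E))ᗮ := by
  refine (Submodule.isOrtho_span.2 ?_).ge (Submodule.subset_span (Set.mem_singleton (w i)))
  rintro _ hu _ rfl
  obtain ⟨j, hj, rfl⟩ := Finset.mem_image.1 hu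
  exact hw.inner_eq_zero (ne_of_mem_of_not_mem hj hi)

theorem ContinuousLinearMap.opNorm_sq_le_of_unit_norm (f : E →L[ℝ] F) {C : ℝ} (hC : 0 ≤ C)
    (hf : ∀ x, ‖x‖ = 1 → ‖f x‖ ^ 2 ≤ C) : ‖f‖ ^ 2 ≤ C := by
  have : ‖f‖ ≤ √C := f.opNorm_le_of_unit_norm (Real.sqrt_nonneg C) fun x hx =>
    Real.le_sqrt_of_sq_le (hf x hx)
  calc ‖f‖ ^ 2 ≤ √C ^ 2 := by gcongr
    _ = C := Real.sq_sqrt hC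

/-- `μ i` is the square of the `i`-th singular value of `T`: the identity says that `v`
diagonalizes `T† T` with eigenvalues `μ`. -/
def IsRightSingularBasis {n : ℕ} (T : E →ₗ[ℝ] F) (v : OrthonormalBasis (Fin n) ℝ E)
    (μ : Fin n → ℝ) : Prop :=
  ∀ x, ‖T x‖ ^ 2 = ∑ i, μ i * ⟪v i, x⟫ ^ 2

theorem LinearMap.exists_isRightSingularBasis [FiniteDimensional ℝ E] [FiniteDimensional ℝ F]
    {n : ℕ} (hn : finrank ℝ E = n) (T : E →ₗ[ℝ] F) :
    ∃ (v : OrthonormalBasis (Fin n) ℝ E) (μ : Fin n → ℝ),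
      Antitone μ ∧ IsRightSingularBasis T v μ := by
  have hS := T.isSymmetric_adjoint_comp_self
  refine ⟨hS.eigenvectorBasis hn, hS.eigenvalues hn, hS.eigenvalues_antitone hn, fun x => ?_⟩
  rw [← real_inner_self_eq_norm_sq, ← LinearMap.adjoint_inner_right,
    ← (hS.eigenvectorBasis hn).sum_inner_mul_inner]
  refine sum_congr rfl fun i _ => ?_
  have := hS.eigenvectorBasis_apply_self_apply hn x i
  simp only [OrthonormalBasis.repr_apply_apply, LinearMap.comp_apply, RCLike.ofReal_real_eq_id,
    id_eq] at this
  rw [this, real_inner_comm]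
  ring

namespace IsRightSingularBasis

variable {n : ℕ} {T : E →ₗ[ℝ] F} {v : OrthonormalBasis (Fin n) ℝ E} {μ : Fin n → ℝ}

theorem norm_sq_apply (hT : IsRightSingularBasis T v μ) (i : Fin n) : ‖T (v i)‖ ^ 2 = μ i := by
  classical
  rw [hT, sum_eq_single i (fun j _ hji => by simp [v.orthonormal.inner_eq_zero hji])
    (by simp), real_inner_self_eq_norm_sq, v.orthonormal.norm_eq_one]
  ring

theorem nonneg (hT : IsRightSingularBasis T v μ) (i : Fin n) : 0 ≤ μ i :=
  hT.norm_sq_apply i ▸ sq_nonneg _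

theorem sum_norm_sq_apply {ι : Type*} [Fintype ι] (hT : IsRightSingularBasis T v μ)
    (w : ι → E) : ∑ j, ‖T (w j)‖ ^ 2 = ∑ i, μ i * ∑ j, ⟪v i, w j⟫ ^ 2 := by
  unfold IsRightSingularBasis at hT
  simp only [hT, mul_sum]
  exact sum_comm

end IsRightSingularBasis

theorem Orthonormal.sum_norm_sq_apply_le [FiniteDimensional ℝ E] [FiniteDimensional ℝ F]
    {ι κ : Type*} [Fintype ι] [Fintype κ] (T : E →ₗ[ℝ] F) {w : ι → E} (hw : Orthonormal ℝ w)
    (b : OrthonormalBasis κ ℝ E) : ∑ j, ‖T (w j)‖ ^ 2 ≤ ∑ j, ‖T (b j)‖ ^ 2 := by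
  obtain ⟨v, μ, -, hT⟩ := T.exists_isRightSingularBasis rfl
  rw [hT.sum_norm_sq_apply, hT.sum_norm_sq_apply]
  refine sum_le_sum fun i _ => mul_le_mul_of_nonneg_left ?_ (hT.nonneg i)
  rw [b.sum_sq_inner_left (v i)]
  exact hw.sum_sq_inner_le (v i)

theorem OrthonormalBasis.sum_norm_sq_apply_eq [FiniteDimensional ℝ E] [FiniteDimensional ℝ F]
    {ι κ : Type*} [Fintype ι] [Fintype κ] (T : E →ₗ[ℝ] F) (b : OrthonormalBasis ι ℝ E)
    (b' : OrthonormalBasis κ ℝ E) : ∑ j, ‖T (b j)‖ ^ 2 = ∑ j, ‖T (b' j)‖ ^ 2 :=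
  (b.orthonormal.sum_norm_sq_apply_le T b').antisymm (b'.orthonormal.sum_norm_sq_apply_le T b)

theorem LinearMap.opNorm_sq_le_sum_norm_sq_apply [FiniteDimensional ℝ E] [FiniteDimensional ℝ F]
    {ι : Type*} [Fintype ι] (T : E →ₗ[ℝ] F) (b : OrthonormalBasis ι ℝ E) :
    ‖LinearMap.toContinuousLinearMap T‖ ^ 2 ≤ ∑ j, ‖T (b j)‖ ^ 2 :=
  (LinearMap.toContinuousLinearMap T).opNorm_sq_le_of_unit_norm
    (sum_nonneg fun _ _ => sq_nonneg _) fun x hx => by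
      simpa using (orthonormal_subsingleton_iff.2 fun _ : Unit => hx).sum_norm_sq_apply_le T b

namespace IsRightSingularBasis

variable {n : ℕ} {T : E →ₗ[ℝ] F} {v : OrthonormalBasis (Fin n) ℝ E} {μ : Fin n → ℝ}

theorem mul_norm_sq_le_norm_sq_apply (hT : IsRightSingularBasis T v μ) (hμ : Antitone μ)
    {p : Fin n} {x : E} (hx : ∀ i, p < i → ⟪v i, x⟫ = 0) : μ p * ‖x‖ ^ 2 ≤ ‖T x‖ ^ 2 := by
  rw [hT, ← v.sum_sq_inner_right, mul_sum]
  refine sum_le_sum fun i _ => ?_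
  rcases le_or_gt i p with hip | hpi
  · exact mul_le_mul_of_nonneg_right (hμ hip) (sq_nonneg _)
  · simp [hx i hpi]

theorem le_opNorm_sub_sq [FiniteDimensional ℝ E] (hT : IsRightSingularBasis T v μ)
    (hμ : Antitone μ) {M : E →ₗ[ℝ] F} {p : Fin n} (hM : finrank ℝ (LinearMap.range M) ≤ p) :
    μ p ≤ ‖LinearMap.toContinuousLinearMap (T - M)‖ ^ 2 := by
  classical
  set S := Submodule.span ℝ ((Ioi p).image v : Set E)
  have hn : finrank ℝ E = n := by simpa using finrank_eq_card_basis v.toBasis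
  have hSM : 0 < finrank ℝ ↥(Sᗮ ⊓ LinearMap.ker M) := by
    have hS : finrank ℝ S ≤ n - 1 - p :=
      (finrank_span_finset_le_card _).trans (card_image_le.trans (Fin.card_Ioi p).le)
    have hperp := S.finrank_add_finrank_orthogonal
    have hinf := Sᗮ.finrank_add_finrank_le_finrank_inf_add (LinearMap.ker M)
    have hker := M.finrank_range_add_finrank_ker
    omega
  set b := stdOrthonormalBasis ℝ ↥(Sᗮ ⊓ LinearMap.ker M)
  set u : E := (b ⟨0, hSM⟩ : E)
  have hu : ‖u‖ = 1 := b.orthonormal.norm_eq_one ⟨0, hSM⟩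
  obtain ⟨huS, huM⟩ := Submodule.mem_inf.1 (b ⟨0, hSM⟩).2
  have hu_orth : ∀ i, p < i → ⟪v i, u⟫ = 0 := fun i hi =>
    Submodule.inner_right_of_mem_orthogonal
      (Submodule.subset_span (mem_coe.2 (mem_image_of_mem v (mem_Ioi.2 hi)))) huS
  calc μ p = μ p * ‖u‖ ^ 2 := by rw [hu]; ring
    _ ≤ ‖T u‖ ^ 2 := hT.mul_norm_sq_le_norm_sq_apply hμ hu_orth
    _ = ‖(T - M) u‖ ^ 2 := by rw [LinearMap.sub_apply, LinearMap.mem_ker.1 huM, sub_zero]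
    _ ≤ ‖LinearMap.toContinuousLinearMap (T - M)‖ ^ 2 := by
      gcongr
      simpa [hu] using (LinearMap.toContinuousLinearMap (T - M)).le_opNorm u

theorem sum_Ioi_le_sum_norm_sq_apply {ι : Type*} [Fintype ι] (hT : IsRightSingularBasis T v μ)
    (hμ : Antitone μ) (p : Fin n) {w : ι → E} (hw : Orthonormal ℝ w)
    (hcard : #(Ioi p) ≤ Fintype.card ι) : ∑ i ∈ Ioi p, μ i ≤ ∑ j, ‖T (w j)‖ ^ 2 := by
  rw [hT.sum_norm_sq_apply]
  refine sum_le_sum_mul_of_card_le _ (hT.nonneg p) (fun i hi => hμ (mem_Ioi.1 hi).le)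
    (fun i hi => hμ (not_lt.1 (mem_Ioi.not.1 hi))) (fun i => sum_nonneg fun _ _ => sq_nonneg _)
    (fun i => ?_) ?_
  · simpa [v.orthonormal.norm_eq_one] using hw.sum_sq_inner_le (v i)
  · rw [sum_comm]
    simpa [v.sum_sq_inner_right, hw.norm_eq_one] using hcard

theorem norm_sq_sub_apply_add_sum_Ioi_le [FiniteDimensional ℝ E] [FiniteDimensional ℝ F]
    {κ : Type*} [Fintype κ] (hT : IsRightSingularBasis T v μ) (hμ : Antitone μ)
    {M : E →ₗ[ℝ] F} {p : Fin n} (hM : finrank ℝ (LinearMap.range M) ≤ p)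
    (b : OrthonormalBasis κ ℝ E) {u : E} (hu : ‖u‖ = 1) :
    ‖(T - M) u‖ ^ 2 + ∑ i ∈ Ioi p, μ i ≤ ∑ j, ‖(T - M) (b j)‖ ^ 2 := by
  set W := LinearMap.ker M ⊓ (ℝ ∙ u)ᗮ
  have hn : finrank ℝ E = n := by simpa using finrank_eq_card_basis v.toBasis
  have hW : #(Ioi p) ≤ finrank ℝ W := by
    have hperp := (ℝ ∙ u).finrank_add_finrank_orthogonal
    have hu₀ := finrank_span_singleton (K := ℝ) (norm_ne_zero_iff.1 (hu ▸ one_ne_zero))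
    have hinf : _ ≤ finrank ℝ W + _ :=
      (LinearMap.ker M).finrank_add_finrank_le_finrank_inf_add (ℝ ∙ u)ᗮ
    have hker := M.finrank_range_add_finrank_ker
    rw [Fin.card_Ioi]
    omega
  set w : Fin (finrank ℝ W) → E := fun j => (stdOrthonormalBasis ℝ W j : E)
  have hw : Orthonormal ℝ w :=
    (stdOrthonormalBasis ℝ W).orthonormal.comp_linearIsometry W.subtypeₗᵢ
  have hwW : ∀ j, w j ∈ W := fun j => (stdOrthonormalBasis ℝ W j).2
  have hMw : ∀ j, (T - M) (w j) = T (w j) := fun j => by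
    rw [LinearMap.sub_apply, LinearMap.mem_ker.1 (Submodule.mem_inf.1 (hwW j)).1, sub_zero]
  have huw : Orthonormal ℝ (Matrix.vecCons u w) := orthonormal_vecCons_iff.2
    ⟨hu, fun j => Submodule.mem_orthogonal_singleton_iff_inner_right.1
      (Submodule.mem_inf.1 (hwW j)).2, hw⟩
  calc ‖(T - M) u‖ ^ 2 + ∑ i ∈ Ioi p, μ i
        ≤ ‖(T - M) u‖ ^ 2 + ∑ j, ‖(T - M) (w j)‖ ^ 2 := by
          simp only [hMw]
          gcongr
          exact hT.sum_Ioi_le_sum_norm_sq_apply hμ p hw (by simpa using hW)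
    _ = ∑ j, ‖(T - M) (Matrix.vecCons u w j)‖ ^ 2 := by simp [Fin.sum_univ_succ]
    _ ≤ ∑ j, ‖(T - M) (b j)‖ ^ 2 := huw.sum_norm_sq_apply_le _ b

theorem opNorm_sub_sq_add_sum_Ioi_le [FiniteDimensional ℝ E] [FiniteDimensional ℝ F]
    {κ : Type*} [Fintype κ] (hT : IsRightSingularBasis T v μ) (hμ : Antitone μ)
    {M : E →ₗ[ℝ] F} {p : Fin n} (hM : finrank ℝ (LinearMap.range M) ≤ p)
    (b : OrthonormalBasis κ ℝ E) :
    ‖LinearMap.toContinuousLinearMap (T - M)‖ ^ 2 + ∑ i ∈ Ioi p, μ i ≤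
      ∑ j, ‖(T - M) (b j)‖ ^ 2 := by
  have key := fun u (hu : ‖u‖ = 1) => hT.norm_sq_sub_apply_add_sum_Ioi_le hμ hM b hu
  have := (LinearMap.toContinuousLinearMap (T - M)).opNorm_sq_le_of_unit_norm
    (C := ∑ j, ‖(T - M) (b j)‖ ^ 2 - ∑ i ∈ Ioi p, μ i)
    (by linarith [key (v p) (v.orthonormal.norm_eq_one p), sq_nonneg ‖(T - M) (v p)‖])
    fun u hu => by simpa using le_sub_iff_add_le.2 (key u hu)
  linarith

theorem exists_finrank_range_le_sum_norm_sq_sub_eq [FiniteDimensional ℝ E]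
    (hT : IsRightSingularBasis T v μ) (p : Fin n) :
    ∃ D : E →ₗ[ℝ] F, finrank ℝ (LinearMap.range D) ≤ p ∧
      ∑ i, ‖(T - D) (v i)‖ ^ 2 = ∑ i ∈ Ici p, μ i := by
  classical
  set U := Submodule.span ℝ ((Iio p).image v : Set E)
  refine ⟨T ∘ₗ U.starProjection.toLinearMap, ?_, ?_⟩
  · calc finrank ℝ (LinearMap.range (T ∘ₗ U.starProjection.toLinearMap))
        ≤ finrank ℝ (LinearMap.range U.starProjection.toLinearMap) := by
          rw [LinearMap.range_comp]; exact Submodule.finrank_map_le _ _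
      _ = finrank ℝ U := by rw [U.range_starProjection]
      _ ≤ p := (finrank_span_finset_le_card _).trans (card_image_le.trans (Fin.card_Iio p).le)
  · have hterm : ∀ i, ‖(T - T ∘ₗ U.starProjection.toLinearMap) (v i)‖ ^ 2 =
        if i ∈ Ici p then μ i else 0 := by
      intro i
      by_cases hi : i ∈ Iio p
      · have hU : U.starProjection (v i) = v i := Submodule.starProjection_eq_self_iff.2
          (Submodule.subset_span (mem_coe.2 (mem_image_of_mem v hi)))
        rw [if_neg (by simpa using hi)]
        simp [hU]
      · have hU : U.starProjection (v i) = 0 := (U.starProjection_apply_eq_zero_iff).2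
          (v.orthonormal.mem_orthogonal_span_image hi)
        rw [if_pos (by simpa using hi)]
        simp [hU, hT.norm_sq_apply]
    simp only [hterm, sum_ite_mem, univ_inter]

end IsRightSingularBasis

end InnerProductSpace

theorem frobSq_eq_sum_norm_sq_apply {m n : ℕ} {ι : Type*} [Fintype ι]
    (M : Matrix (Fin m) (Fin n) ℝ) (b : OrthonormalBasis ι ℝ (EuclideanSpace ℝ (Fin n))) :
    frobSq M = ∑ j, ‖toEuclideanLin M (b j)‖ ^ 2 := by
  rw [b.sum_norm_sq_apply_eq _ (EuclideanSpace.basisFun (Fin n) ℝ), frobSq, sum_comm]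
  refine sum_congr rfl fun j _ => ?_
  simp [EuclideanSpace.norm_sq_eq, mulVec_single]

theorem Matrix.rank_eq_finrank_range_toEuclideanLin {m n : ℕ} (M : Matrix (Fin m) (Fin n) ℝ) :
    M.rank = finrank ℝ (LinearMap.range (toEuclideanLin M)) := by
  rw [M.rank_eq_finrank_range_toLin (PiLp.basisFun 2 ℝ (Fin m)) (PiLp.basisFun 2 ℝ (Fin n))]
  rfl

theorem spec_sq_le_frobSq {m n : ℕ} (M : Matrix (Fin m) (Fin n) ℝ) : spec M ^ 2 ≤ frobSq M := by
  rw [spec, frobSq_eq_sum_norm_sq_apply _ (EuclideanSpace.basisFun _ ℝ)]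
  exact (toEuclideanLin M).opNorm_sq_le_sum_norm_sq_apply _

/-- Relative Frobenius-norm error implies additive spectral-norm error: if `B` has rank at most
`k` and `‖A - B‖_F² ≤ (1+ε)‖A - A_k‖_F²`, then `‖A - B‖₂² ≤ ‖A - A_k‖₂² + ε‖A - A_k‖_F²`. -/
theorem frobenius_to_spectral_additive {n k : ℕ} (ε : ℝ)
    (A B Ak : Matrix (Fin n) (Fin n) ℝ)
    (hBrank : B.rank ≤ k)
    (hAkrank : Ak.rank ≤ k)
    (hAkbest : ∀ D : Matrix (Fin n) (Fin n) ℝ, D.rank ≤ k →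
      frobSq (A - Ak) ≤ frobSq (A - D))
    (hB : frobSq (A - B) ≤ (1 + ε) * frobSq (A - Ak)) :
    spec (A - B) ^ 2 ≤ spec (A - Ak) ^ 2 + ε * frobSq (A - Ak) := by
  rcases lt_or_ge k n with hk | hk
  · obtain ⟨v, μ, hμ, hT⟩ :=
      (toEuclideanLin A).exists_isRightSingularBasis finrank_euclideanSpace_fin
    set p : Fin n := ⟨k, hk⟩
    obtain ⟨D, hDrank, hD⟩ := hT.exists_finrank_range_le_sum_norm_sq_sub_eq p
    have hAk : frobSq (A - Ak) ≤ μ p + ∑ i ∈ Ioi p, μ i :=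
      calc frobSq (A - Ak) ≤ frobSq (A - toEuclideanLin.symm D) := hAkbest _
            (by rwa [rank_eq_finrank_range_toEuclideanLin, LinearEquiv.apply_symm_apply])
        _ = μ p + ∑ i ∈ Ioi p, μ i := by
            rw [frobSq_eq_sum_norm_sq_apply _ v, map_sub, LinearEquiv.apply_symm_apply, hD,
              add_sum_Ioi_eq_sum_Ici]
    have hweyl : μ p ≤ spec (A - Ak) ^ 2 := by
      rw [spec, map_sub]
      exact hT.le_opNorm_sub_sq hμ (Ak.rank_eq_finrank_range_toEuclideanLin ▸ hAkrank)
    have htail : spec (A - B) ^ 2 + ∑ i ∈ Ioi p, μ i ≤ frobSq (A - B) := by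
      rw [spec, frobSq_eq_sum_norm_sq_apply _ v, map_sub]
      exact hT.opNorm_sub_sq_add_sum_Ioi_le hμ
        (B.rank_eq_finrank_range_toEuclideanLin ▸ hBrank) v
    linarith
  · have hAk : frobSq (A - Ak) = 0 := le_antisymm
      (by simpa [frobSq] using hAkbest A ((rank_le_width A).trans hk))
      (by unfold frobSq; positivity)
    rw [hAk] at hB ⊢
    nlinarith [spec_sq_le_frobSq (A - B), sq_nonneg (spec (A - Ak))]
end
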